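/- For all λ > 0 and γ ≥ 0, (2λ^{3/2}π/3) ∫₀^∞ ∫₀^∞ ∫₀^∞ λπ ĥ(t,h₁,h₂)² e^{−(γ + λπ) ĥ(t,h₁,h₂)²} dt dh₁ dh₂ = (1 + γ/(λπ))^{−5/2}, where ĥ(t,h₁,h₂)² := (1/4)[ t² + 2(h₁² + h₂²) + (h₂² − h₁²)²/t² ]. Equivalently, the Palm distribution of the typical tropical-interference handover distance H_{I'} is Nakagami with parameters (5/2, 5/(2λπ)), i.e. E[e^{−γ H_{I'}²}] = (1 + γ/(λπ))^{−5/2}. -/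

import Mathlib

/-!
Put `a = h₂² - h₁² ≥ 0` (say `h₁ ≤ h₂`, the integrand being symmetric). Then
`ĥ² = ((t - a / t) / 2)² + h₂²`, and `t ↦ (t - a / t) / 2` maps `(0, ∞)` onto `ℝ` with inverse
`u ↦ u + √(u² + a)`, whose Jacobian `1 + u / √(u² + a)` has an odd part that integrates to zero
against an even function. So the `t`-integral is a Gaussian integral in `u` and depends only on
`max h₁ h₂`; integrating a function of `max h₁ h₂` over the quadrant is integrating against `2h dh`.
With `c = γ + λπ` the triple integral is `3√π / (2 c^{5/2})`, and the prefactor turns this into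
`(λπ / c)^{5/2}`.
-/

open MeasureTheory Set Real
open scoped ENNReal

section GaussianMoments

variable {c : ℝ}

theorem integrable_pow_mul_exp_neg_mul_sq (hc : 0 < c) (k : ℕ) :
    Integrable fun x : ℝ => x ^ k * exp (-(c * x ^ 2)) := by
  simpa [rpow_natCast] using
    integrable_rpow_mul_exp_neg_mul_sq hc (s := k) (by linarith [k.cast_nonneg (α := ℝ)])

theorem integral_Ioi_pow_mul_exp_neg_mul_sq (hc : 0 < c) (k : ℕ) :
    ∫ x in Ioi (0 : ℝ), x ^ k * exp (-(c * x ^ 2)) =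
      Gamma ((k + 1) / 2) / (2 * √c ^ (k + 1)) := by
  have h := integral_rpow_mul_exp_neg_mul_rpow two_pos
    (by linarith [k.cast_nonneg (α := ℝ)] : (-1 : ℝ) < k) hc
  simp only [rpow_natCast, rpow_two, neg_mul] at h
  rw [h, sqrt_eq_rpow, ← rpow_natCast, ← rpow_mul hc.le, neg_div,
    rpow_neg hc.le]
  push_cast
  field_simp

end GaussianMoments

section HalfSubDiv

variable {a : ℝ}

theorem abs_lt_sqrt_sq_add (ha : 0 < a) (u : ℝ) : |u| < √(u ^ 2 + a) :=
  (lt_sqrt (abs_nonneg u)).2 (by rw [sq_abs]; linarith)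

theorem half_sub_div_add_sqrt_sq_add (ha : 0 < a) (u : ℝ) :
    ((u + √(u ^ 2 + a)) - a / (u + √(u ^ 2 + a))) / 2 = u := by
  have hpos : 0 < u + √(u ^ 2 + a) := by
    linarith [abs_lt_sqrt_sq_add ha u, neg_abs_le u]
  have hsq : √(u ^ 2 + a) ^ 2 = u ^ 2 + a := sq_sqrt (by positivity)
  field_simp
  linear_combination hsq

theorem image_add_sqrt_sq_add (ha : 0 < a) :
    (fun u => u + √(u ^ 2 + a)) '' univ = Ioi 0 := by
  ext t
  refine ⟨?_, fun (ht : 0 < t) => ⟨(t - a / t) / 2, trivial, ?_⟩⟩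
  · rintro ⟨u, -, rfl⟩
    exact (by linarith [abs_lt_sqrt_sq_add ha u, neg_abs_le u] : 0 < u + √(u ^ 2 + a))
  · have hsq : ((t - a / t) / 2) ^ 2 + a = ((t + a / t) / 2) ^ 2 := by
      field_simp; ring
    simp only
    rw [hsq, sqrt_sq (by positivity)]
    ring

theorem hasDerivAt_add_sqrt_sq_add (ha : 0 < a) (u : ℝ) :
    HasDerivAt (fun u => u + √(u ^ 2 + a)) (1 + u / √(u ^ 2 + a)) u := by
  have hs : HasDerivAt (fun u => u ^ 2 + a) (2 * u) u := by
    simpa using (hasDerivAt_pow 2 u).add_const a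
  have hne : u ^ 2 + a ≠ 0 := by positivity
  have h := (hasDerivAt_id' u).fun_add (hs.sqrt hne)
  rwa [mul_div_mul_left _ _ two_ne_zero] at h

/-- The substitution `t = u + √(u² + a)`, inverse to `u = (t - a / t) / 2`. -/
theorem integral_Ioi_comp_half_sub_div_of_pos (ha : 0 < a) (g : ℝ → ℝ) :
    ∫ t in Ioi (0 : ℝ), g ((t - a / t) / 2) = ∫ u, (1 + u / √(u ^ 2 + a)) * g u := by
  have hinj : Function.Injective fun u => u + √(u ^ 2 + a) :=
    Function.LeftInverse.injective (g := fun t => (t - a / t) / 2)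
      (half_sub_div_add_sqrt_sq_add ha)
  rw [← image_add_sqrt_sq_add ha, integral_image_eq_integral_abs_deriv_smul MeasurableSet.univ
    (fun u _ => (hasDerivAt_add_sqrt_sq_add ha u).hasDerivWithinAt) hinj.injOn,
    Measure.restrict_univ]
  congr 1
  ext u
  have hu : -1 < u / √(u ^ 2 + a) := by
    rw [lt_div_iff₀ (by positivity)]
    linarith [abs_lt_sqrt_sq_add ha u, neg_abs_le u]
  rw [smul_eq_mul, half_sub_div_add_sqrt_sq_add ha, abs_of_pos (by linarith)]

theorem integral_Ioi_comp_half_sub_div {g : ℝ → ℝ} (hg : Integrable g)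
    (heven : ∀ u, g (-u) = g u) (ha : 0 ≤ a) :
    ∫ t in Ioi (0 : ℝ), g ((t - a / t) / 2) = 2 * ∫ u in Ioi (0 : ℝ), g u := by
  rcases ha.eq_or_lt with rfl | ha
  · simp_rw [zero_div, sub_zero, div_eq_inv_mul]
    rw [integral_comp_mul_left_Ioi g 0 (by norm_num : (0 : ℝ) < 2⁻¹)]
    simp
  have hodd_int : Integrable fun u => u / √(u ^ 2 + a) * g u := by
    have hsqrt : ∀ u, √(u ^ 2 + a) ≠ 0 := fun u => (sqrt_pos.2 (by positivity)).ne'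
    refine hg.bdd_mul (c := 1) (continuous_id.div (by fun_prop) hsqrt).aestronglyMeasurable
      (Filter.Eventually.of_forall fun u => ?_)
    rw [norm_div, norm_eq_abs, norm_of_nonneg (sqrt_nonneg _)]
    exact div_le_one_of_le₀ (abs_lt_sqrt_sq_add ha u).le (sqrt_nonneg _)
  -- the odd part of the Jacobian integrates to zero against the even `g`
  have hodd : ∫ u, u / √(u ^ 2 + a) * g u = 0 := by
    have h := integral_neg_eq_self (fun u => u / √(u ^ 2 + a) * g u) volume
    simp only [neg_sq, heven, neg_div, neg_mul, integral_neg] at h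
    linarith
  have habs : ∫ u, g u = ∫ u, g |u| := by
    congr 1; ext u
    rcases abs_choice u with h | h <;> rw [h]
    exact (heven u).symm
  rw [integral_Ioi_comp_half_sub_div_of_pos ha]
  simp_rw [add_mul, one_mul]
  rw [integral_add hg hodd_int, hodd, add_zero, habs, integral_comp_abs]

end HalfSubDiv

section MaxIntegral

variable {Φ : ℝ → ℝ≥0∞}

theorem lintegral_Ioi_comp_max {y : ℝ} (hy : 0 ≤ y) :
    ∫⁻ x in Ioi 0, Φ (max x y) = ENNReal.ofReal y * Φ y + ∫⁻ x in Ioi y, Φ x := by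
  rw [← Ioc_union_Ioi_eq_Ioi hy, lintegral_union measurableSet_Ioi (Ioc_disjoint_Ioi le_rfl),
    setLIntegral_congr_fun measurableSet_Ioc fun x hx => by rw [max_eq_right hx.2],
    setLIntegral_congr_fun measurableSet_Ioi fun x (hx : y < x) => by rw [max_eq_left hx.le],
    setLIntegral_const, Real.volume_Ioc, sub_zero, mul_comm]

theorem lintegral_Ioi_lintegral_Ioi (hΦ : Measurable Φ) :
    ∫⁻ y in Ioi 0, ∫⁻ x in Ioi y, Φ x = ∫⁻ x in Ioi 0, ENNReal.ofReal x * Φ x := by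
  have hinner : ∀ y ∈ Ioi (0 : ℝ),
      ∫⁻ x in Ioi y, Φ x = ∫⁻ x in Ioi 0, (Ioi y).indicator Φ x := by
    intro y (hy : 0 < y)
    rw [setLIntegral_indicator measurableSet_Ioi, Ioi_inter_Ioi, max_eq_left hy.le]
  have hmeas : Measurable (Function.uncurry fun y x => (Ioi y).indicator Φ x) := by
    change Measurable ({p : ℝ × ℝ | p.1 < p.2}.indicator fun p => Φ p.2)
    exact (hΦ.comp measurable_snd).indicator (measurableSet_lt measurable_fst measurable_snd)
  rw [setLIntegral_congr_fun measurableSet_Ioi hinner,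
    lintegral_lintegral_swap hmeas.aemeasurable]
  refine setLIntegral_congr_fun measurableSet_Ioi fun x (hx : 0 < x) => ?_
  have hind : ∀ y, (Ioi y).indicator Φ x = (Iio x).indicator (fun _ => Φ x) y := by
    intro y
    by_cases hyx : y < x <;> simp [indicator, hyx]
  simp_rw [hind]
  rw [setLIntegral_indicator measurableSet_Iio, setLIntegral_const, Iio_inter_Ioi,
    Real.volume_Ioo, sub_zero, mul_comm]

theorem lintegral_Ioi_lintegral_Ioi_comp_max (hΦ : Measurable Φ) :
    ∫⁻ y in Ioi 0, ∫⁻ x in Ioi 0, Φ (max x y) = 2 * ∫⁻ x in Ioi 0, ENNReal.ofReal x * Φ x := by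
  rw [setLIntegral_congr_fun measurableSet_Ioi fun y (hy : 0 < y) =>
      lintegral_Ioi_comp_max hy.le,
    lintegral_add_left (by fun_prop), lintegral_Ioi_lintegral_Ioi hΦ, two_mul]

theorem integral_Ioi_integral_Ioi_comp_max {φ : ℝ → ℝ} (hφ : Measurable φ) (h0 : ∀ x, 0 ≤ φ x)
    (hint : IntegrableOn (fun x => x * φ x) (Ioi 0)) :
    ∫ y in Ioi 0, ∫ x in Ioi 0, φ (max x y) = 2 * ∫ x in Ioi 0, x * φ x := by
  set G : ℝ → ℝ≥0∞ := fun y => ∫⁻ x in Ioi 0, ENNReal.ofReal (φ (max x y))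
  have hG : Measurable G :=
    Measurable.lintegral_prod_right' (ν := volume.restrict (Ioi 0))
      (f := fun p : ℝ × ℝ => ENNReal.ofReal (φ (max p.2 p.1))) (by fun_prop)
  have hxφ : ∫⁻ x in Ioi 0, ENNReal.ofReal x * ENNReal.ofReal (φ x) =
      ENNReal.ofReal (∫ x in Ioi 0, x * φ x) := by
    rw [ofReal_integral_eq_lintegral_ofReal hint]
    · refine setLIntegral_congr_fun measurableSet_Ioi fun x (hx : 0 < x) => ?_
      rw [ENNReal.ofReal_mul hx.le]
    · filter_upwards [ae_restrict_mem measurableSet_Ioi] with x (hx : 0 < x)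
      exact mul_nonneg hx.le (h0 x)
  have htotal : ∫⁻ y in Ioi 0, G y = 2 * ENNReal.ofReal (∫ x in Ioi 0, x * φ x) := by
    rw [← hxφ]
    exact lintegral_Ioi_lintegral_Ioi_comp_max hφ.ennreal_ofReal
  calc ∫ y in Ioi 0, ∫ x in Ioi 0, φ (max x y) = ∫ y in Ioi 0, (G y).toReal := by
        refine integral_congr_ae (Filter.Eventually.of_forall fun y => ?_)
        exact integral_eq_lintegral_of_nonneg_ae (Filter.Eventually.of_forall fun x => h0 _)
          (hφ.comp (measurable_id.max measurable_const)).aestronglyMeasurable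
    _ = 2 * ∫ x in Ioi 0, x * φ x := by
        rw [integral_toReal hG.aemeasurable (ae_lt_top hG (by simp [htotal, ENNReal.mul_eq_top])),
          htotal, ENNReal.toReal_mul, ENNReal.toReal_ofReal (setIntegral_nonneg measurableSet_Ioi
            fun x (hx : 0 < x) => mul_nonneg hx.le (h0 x))]
        simp

end MaxIntegral

/-- The paper's `ĥ(t, h₁, h₂)²`. -/
noncomputable def birdDistSq (t h₁ h₂ : ℝ) : ℝ :=
  1 / 4 * (t ^ 2 + 2 * (h₁ ^ 2 + h₂ ^ 2) + (h₂ ^ 2 - h₁ ^ 2) ^ 2 / t ^ 2)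

theorem birdDistSq_comm (t h₁ h₂ : ℝ) : birdDistSq t h₁ h₂ = birdDistSq t h₂ h₁ := by
  unfold birdDistSq; ring

theorem birdDistSq_eq {t : ℝ} (ht : t ≠ 0) (h₁ h₂ : ℝ) :
    birdDistSq t h₁ h₂ = ((t - (h₂ ^ 2 - h₁ ^ 2) / t) / 2) ^ 2 + h₂ ^ 2 := by
  unfold birdDistSq; field_simp; ring

section BirdDist

variable {c : ℝ}

theorem sq_add_mul_exp_neg_eq (c h u : ℝ) :
    (u ^ 2 + h ^ 2) * exp (-(c * (u ^ 2 + h ^ 2))) =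
      exp (-(c * h ^ 2)) * (u ^ 2 * exp (-(c * u ^ 2))) +
        exp (-(c * h ^ 2)) * h ^ 2 * (u ^ 0 * exp (-(c * u ^ 2))) := by
  rw [mul_add c, neg_add, exp_add]; ring

theorem integral_Ioi_sq_add_mul_exp_neg (hc : 0 < c) (h : ℝ) :
    ∫ u in Ioi (0 : ℝ), (u ^ 2 + h ^ 2) * exp (-(c * (u ^ 2 + h ^ 2))) =
      √(π / c) / 2 * (h ^ 2 + 1 / (2 * c)) * exp (-(c * h ^ 2)) := by
  simp_rw [sq_add_mul_exp_neg_eq]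
  rw [integral_add ((integrable_pow_mul_exp_neg_mul_sq hc 2).const_mul _).integrableOn
      ((integrable_pow_mul_exp_neg_mul_sq hc 0).const_mul _).integrableOn,
    integral_const_mul, integral_const_mul, integral_Ioi_pow_mul_exp_neg_mul_sq hc,
    integral_Ioi_pow_mul_exp_neg_mul_sq hc]
  have hΓ : Gamma (3 / 2) = √π / 2 := by
    rw [show (3 : ℝ) / 2 = 1 / 2 + 1 by norm_num, Gamma_add_one (by norm_num), Gamma_one_half_eq]
    ring
  have hsc : √c ^ 2 = c := sq_sqrt hc.le
  norm_num [hΓ, Gamma_one_half_eq, sqrt_div' π hc.le]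
  field_simp
  rw [hsc]
  ring

theorem integrable_sq_add_mul_exp_neg (hc : 0 < c) (h : ℝ) :
    Integrable fun u : ℝ => (u ^ 2 + h ^ 2) * exp (-(c * (u ^ 2 + h ^ 2))) := by
  simp_rw [sq_add_mul_exp_neg_eq]
  exact ((integrable_pow_mul_exp_neg_mul_sq hc 2).const_mul _).add
    ((integrable_pow_mul_exp_neg_mul_sq hc 0).const_mul _)

theorem integral_Ioi_birdDistSq_mul_exp_neg (hc : 0 < c) {h₁ h₂ : ℝ} (h : h₁ ^ 2 ≤ h₂ ^ 2) :
    ∫ t in Ioi (0 : ℝ), birdDistSq t h₁ h₂ * exp (-(c * birdDistSq t h₁ h₂)) =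
      √(π / c) * (h₂ ^ 2 + 1 / (2 * c)) * exp (-(c * h₂ ^ 2)) := by
  rw [setIntegral_congr_fun measurableSet_Ioi fun t (ht : 0 < t) => by
      rw [birdDistSq_eq ht.ne'],
    integral_Ioi_comp_half_sub_div
      (g := fun u => (u ^ 2 + h₂ ^ 2) * exp (-(c * (u ^ 2 + h₂ ^ 2))))
      (integrable_sq_add_mul_exp_neg hc h₂) (fun u => by rw [neg_sq]) (sub_nonneg.2 h),
    integral_Ioi_sq_add_mul_exp_neg hc]
  ring

theorem integral_Ioi_birdDistSq_mul_exp_neg_max (hc : 0 < c) {h₁ h₂ : ℝ} (h₁0 : 0 ≤ h₁)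
    (h₂0 : 0 ≤ h₂) :
    ∫ t in Ioi (0 : ℝ), birdDistSq t h₁ h₂ * exp (-(c * birdDistSq t h₁ h₂)) =
      √(π / c) * (max h₁ h₂ ^ 2 + 1 / (2 * c)) * exp (-(c * max h₁ h₂ ^ 2)) := by
  rcases le_total h₁ h₂ with h | h
  · rw [max_eq_right h, integral_Ioi_birdDistSq_mul_exp_neg hc (pow_le_pow_left₀ h₁0 h 2)]
  · simp_rw [max_eq_left h, birdDistSq_comm _ h₁]
    exact integral_Ioi_birdDistSq_mul_exp_neg hc (pow_le_pow_left₀ h₂0 h 2)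

theorem mul_sq_add_mul_exp_neg_eq (c h : ℝ) :
    h * (√(π / c) * (h ^ 2 + 1 / (2 * c)) * exp (-(c * h ^ 2))) =
      √(π / c) * (h ^ 3 * exp (-(c * h ^ 2))) +
        √(π / c) / (2 * c) * (h ^ 1 * exp (-(c * h ^ 2))) := by
  ring

theorem integral_Ioi_mul_sq_add_mul_exp_neg (hc : 0 < c) :
    ∫ h in Ioi (0 : ℝ), h * (√(π / c) * (h ^ 2 + 1 / (2 * c)) * exp (-(c * h ^ 2))) =
      3 / 4 * √(π / c) / c ^ 2 := by
  simp_rw [mul_sq_add_mul_exp_neg_eq]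
  rw [integral_add ((integrable_pow_mul_exp_neg_mul_sq hc 3).const_mul _).integrableOn
      ((integrable_pow_mul_exp_neg_mul_sq hc 1).const_mul _).integrableOn,
    integral_const_mul, integral_const_mul, integral_Ioi_pow_mul_exp_neg_mul_sq hc,
    integral_Ioi_pow_mul_exp_neg_mul_sq hc]
  have hsc : √c ^ 2 = c := sq_sqrt hc.le
  norm_num
  field_simp
  rw [show √c ^ 4 = (√c ^ 2) ^ 2 by ring, hsc]
  ring

theorem integral_birdDistSq_mul_exp_neg (hc : 0 < c) :
    ∫ h₂ in Ioi (0 : ℝ), ∫ h₁ in Ioi (0 : ℝ), ∫ t in Ioi (0 : ℝ),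
        birdDistSq t h₁ h₂ * exp (-(c * birdDistSq t h₁ h₂)) = 3 / 2 * √(π / c) / c ^ 2 := by
  have hmax : ∀ h₂ ∈ Ioi (0 : ℝ), ∫ h₁ in Ioi (0 : ℝ), ∫ t in Ioi (0 : ℝ),
      birdDistSq t h₁ h₂ * exp (-(c * birdDistSq t h₁ h₂)) =
        ∫ h₁ in Ioi (0 : ℝ),
          √(π / c) * (max h₁ h₂ ^ 2 + 1 / (2 * c)) * exp (-(c * max h₁ h₂ ^ 2)) :=
    fun h₂ (h₂0 : 0 < h₂) => setIntegral_congr_fun measurableSet_Ioi fun h₁ (h₁0 : 0 < h₁) =>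
      integral_Ioi_birdDistSq_mul_exp_neg_max hc h₁0.le h₂0.le
  rw [setIntegral_congr_fun measurableSet_Ioi hmax,
    integral_Ioi_integral_Ioi_comp_max
      (φ := fun h => √(π / c) * (h ^ 2 + 1 / (2 * c)) * exp (-(c * h ^ 2))) (by fun_prop)
      (fun h => by positivity) ?_,
    integral_Ioi_mul_sq_add_mul_exp_neg hc]
  · ring
  · simp_rw [mul_sq_add_mul_exp_neg_eq]
    exact (((integrable_pow_mul_exp_neg_mul_sq hc 3).const_mul _).add
      ((integrable_pow_mul_exp_neg_mul_sq hc 1).const_mul _)).integrableOn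

end BirdDist

theorem stmt_8 (lam γ : ℝ) (hlam : 0 < lam) (hγ : 0 ≤ γ) :
    2 * lam ^ ((3:ℝ)/2) * Real.pi / 3 *
        ∫ h₂ in Ioi (0:ℝ), ∫ h₁ in Ioi (0:ℝ), ∫ t in Ioi (0:ℝ),
          lam * Real.pi *
              (1/4 * (t ^ 2 + 2 * (h₁ ^ 2 + h₂ ^ 2) + (h₂ ^ 2 - h₁ ^ 2) ^ 2 / t ^ 2)) *
            Real.exp (-((γ + lam * Real.pi) *
              (1/4 * (t ^ 2 + 2 * (h₁ ^ 2 + h₂ ^ 2) + (h₂ ^ 2 - h₁ ^ 2) ^ 2 / t ^ 2)))) =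
      (1 + γ / (lam * Real.pi)) ^ (-(5:ℝ)/2) := by
  have hc : 0 < γ + lam * π := by positivity
  have h := integral_birdDistSq_mul_exp_neg hc
  simp only [birdDistSq] at h
  simp_rw [mul_assoc (lam * π), integral_const_mul]
  rw [h]
  have hbase : 1 + γ / (lam * π) = (lam * π / (γ + lam * π))⁻¹ := by
    field_simp; ring
  have hsplit : ∀ {x : ℝ} (r : ℝ), 0 < x → x ^ (r + 1 / 2) = x ^ r * √x := fun r hx => by
    rw [rpow_add hx, sqrt_eq_rpow]
  rw [hbase, inv_rpow (by positivity), ← rpow_neg (by positivity), neg_div, neg_neg,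
    show (5 : ℝ) / 2 = 2 + 1 / 2 by norm_num, show (3 : ℝ) / 2 = 1 + 1 / 2 by norm_num,
    hsplit _ hlam, hsplit _ (by positivity), rpow_one, rpow_two, sqrt_div' _ hc.le,
    sqrt_div' _ hc.le, sqrt_mul' _ pi_pos.le]
  field_simp
  ring
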